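/- arXiv:2504.01585 — 5 statements merged into one kernel-verified Lean document; each statement's English description precedes it below -/
import Mathlib

section
/- Let R: L_{2e} → L_{2e} be causal and period preserving with finite incremental gain Γ(R). For any pair of T-periodic inputs u₁, u₂ with T-periodic asymptotic outputs ỹ₁, ỹ₂, the limit as t → ∞ of ‖P_t(Ru₁ − Ru₂)‖/‖P_t(u₁ − u₂)‖ equals ‖ỹ₁ − ỹ₂‖_RMS / ‖u₁ − u₂‖_RMS. -/
/-!
Write `E f a b = ∫_{(a,b]} f²`. For a `T`-periodic `g`, `E g 0 (n T) = n E g 0 T`, so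
`E g 0 t / t → E g 0 T / T`. If `|f - g| ≤ ε` beyond some time `s`, then pointwise
`f² ≤ (1 + ε)(g² + ε)` there, so `E f 0 t / t` and `E g 0 t / t` dominate each other up to a factor
`1 + ε` and an error `ε + o(1)`, and therefore share the limit. Only monotonicity of the lower
Lebesgue integral is used, so no measurability of `f` or `g` is needed. Hence
`‖P_t f‖ / √t → ‖g‖_RMS`, both for `f = g = u₁ - u₂` and for `f = R u₁ - R u₂`, `g = ỹ₁ - ỹ₂`
(the latter has finite truncated norms by causality and the incremental gain bound), and the
factors `√t` cancel in the ratio.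
-/

open MeasureTheory Filter

/-- Truncation operator `P_T` on signals over `[0,∞)`. -/
noncomputable def trunc (T : ℝ) (u : ℝ → ℝ) : ℝ → ℝ := fun t => if t ≤ T then u t else 0

/-- The measure of the time axis `[0,∞)`. -/
noncomputable def timeMeasure : MeasureTheory.Measure ℝ := volume.restrict (Set.Ici 0)

/-- The truncated `L₂`-norm `‖P_t v‖` of a signal. -/
noncomputable def truncNorm (t : ℝ) (v : ℝ → ℝ) : ℝ :=
  (eLpNorm (trunc t v) 2 timeMeasure).toReal

/-- RMS norm of a `T`-periodic signal: `‖v‖_RMS = (1/√T)·‖v‖_{L₂[0,T]}`. -/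
noncomputable def rmsNorm (T : ℝ) (v : ℝ → ℝ) : ℝ :=
  (eLpNorm v 2 (volume.restrict (Set.Ioc 0 T))).toReal / Real.sqrt T

open Set Topology
open scoped ENNReal

noncomputable def energy (f : ℝ → ℝ) (a b : ℝ) : ℝ≥0∞ :=
  ∫⁻ x in Ioc a b, ‖f x‖ₑ ^ 2

section Energy

variable {f g : ℝ → ℝ} {T : ℝ}

lemma energy_mono (f : ℝ → ℝ) {a b a' b' : ℝ} (ha : a' ≤ a) (hb : b ≤ b') :
    energy f a b ≤ energy f a' b' :=
  lintegral_mono' (Measure.restrict_mono (Ioc_subset_Ioc ha hb) le_rfl) le_rfl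

lemma energy_add (f : ℝ → ℝ) {a b c : ℝ} (hab : a ≤ b) (hbc : b ≤ c) :
    energy f a b + energy f b c = energy f a c := by
  rw [energy, energy, energy, ← Ioc_union_Ioc_eq_Ioc hab hbc,
    Measure.restrict_union (Ioc_disjoint_Ioc_of_le le_rfl) measurableSet_Ioc,
    lintegral_add_measure]

lemma energy_add_period (hg : ∀ t, 0 ≤ t → g (t + T) = g t) {a : ℝ} (ha : 0 ≤ a) (b : ℝ) :
    energy g (a + T) (b + T) = energy g a b := by
  rw [energy, energy, ← lintegral_indicator measurableSet_Ioc,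
    ← lintegral_indicator measurableSet_Ioc, ← lintegral_add_right_eq_self _ T]
  congr 1 with x
  by_cases hx : x ∈ Ioc a b
  · have hxT : x + T ∈ Ioc (a + T) (b + T) := ⟨by linarith [hx.1], by linarith [hx.2]⟩
    simp [indicator_of_mem hx, indicator_of_mem hxT, hg x (ha.trans hx.1.le)]
  · have hxT : x + T ∉ Ioc (a + T) (b + T) := fun h => hx ⟨by linarith [h.1], by linarith [h.2]⟩
    simp [indicator_of_notMem hx, indicator_of_notMem hxT]

lemma energy_add_nat_mul_period (hg : ∀ t, 0 ≤ t → g (t + T) = g t) (hT : 0 ≤ T) (n : ℕ)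
    {a : ℝ} (ha : 0 ≤ a) (b : ℝ) : energy g (a + n * T) (b + n * T) = energy g a b := by
  induction n with
  | zero => simp
  | succ n ih =>
    rw [Nat.cast_succ, add_one_mul, ← add_assoc, ← add_assoc,
      energy_add_period hg (by positivity), ih]

lemma energy_nat_mul_period (hg : ∀ t, 0 ≤ t → g (t + T) = g t) (hT : 0 ≤ T) (n : ℕ) :
    energy g 0 (n * T) = n * energy g 0 T := by
  induction n with
  | zero => simp [energy]
  | succ n ih =>
    have hblock := energy_add_nat_mul_period hg hT n le_rfl T
    rw [zero_add, add_comm T] at hblock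
    push_cast
    rw [add_one_mul, ← energy_add g (b := n * T) (by positivity) (by linarith), ih, hblock,
      add_one_mul]

lemma energy_le_of_abs_le {s t ε : ℝ} (hε : 0 ≤ ε) (h : ∀ x ∈ Ioc s t, |f x| ≤ |g x| + ε) :
    energy f s t ≤ ENNReal.ofReal (1 + ε) * (energy g s t + ENNReal.ofReal (ε * (t - s))) := by
  have hpt : ∀ x ∈ Ioc s t,
      ‖f x‖ₑ ^ 2 ≤ ENNReal.ofReal (1 + ε) * (‖g x‖ₑ ^ 2 + ENNReal.ofReal ε) := by
    intro x hx
    -- `(|y| + ε)² ≤ (1 + ε)(y² + ε)` since the difference is `ε (|y| - 1)²`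
    have hx' := h x hx
    rw [Real.enorm_eq_ofReal_abs, Real.enorm_eq_ofReal_abs, ← ENNReal.ofReal_pow (abs_nonneg _),
      ← ENNReal.ofReal_pow (abs_nonneg _), ← ENNReal.ofReal_add (by positivity) hε,
      ← ENNReal.ofReal_mul (by linarith)]
    refine ENNReal.ofReal_le_ofReal ?_
    nlinarith [abs_nonneg (f x), abs_nonneg (g x), mul_nonneg hε (sq_nonneg (|g x| - 1))]
  calc energy f s t
      ≤ ∫⁻ x in Ioc s t, ENNReal.ofReal (1 + ε) * (‖g x‖ₑ ^ 2 + ENNReal.ofReal ε) :=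
        setLIntegral_mono' measurableSet_Ioc hpt
    _ = _ := by
        rw [lintegral_const_mul' _ _ ENNReal.ofReal_ne_top, lintegral_add_right _ measurable_const,
          setLIntegral_const, Real.volume_Ioc, ← ENNReal.ofReal_mul hε, energy]

end Energy

lemma eLpNorm_two_eq_lintegral_rpow {α E : Type*} [MeasurableSpace α] [NormedAddCommGroup E]
    (f : α → E) (μ : Measure α) :
    eLpNorm f 2 μ = (∫⁻ x, ‖f x‖ₑ ^ 2 ∂μ) ^ (1 / 2 : ℝ) := by
  rw [eLpNorm_eq_lintegral_rpow_enorm_toReal two_ne_zero ENNReal.ofNat_ne_top]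
  norm_num

lemma eLpNorm_trunc (f : ℝ → ℝ) (t : ℝ) :
    eLpNorm (trunc t f) 2 timeMeasure = energy f 0 t ^ (1 / 2 : ℝ) := by
  have hind : (fun x => ‖trunc t f x‖ₑ ^ 2) = (Iic t).indicator (fun x => ‖f x‖ₑ ^ 2) := by
    ext x
    by_cases hx : x ≤ t <;> simp [trunc, hx]
  rw [eLpNorm_two_eq_lintegral_rpow, hind, timeMeasure, lintegral_indicator measurableSet_Iic,
    Measure.restrict_restrict measurableSet_Iic, Iic_inter_Ici,
    Measure.restrict_congr_set Ioc_ae_eq_Icc.symm, energy]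

lemma energy_ne_top_of_eLpNorm_trunc_ne_top {f : ℝ → ℝ} {t : ℝ}
    (h : eLpNorm (trunc t f) 2 timeMeasure ≠ ⊤) : energy f 0 t ≠ ⊤ := by
  rw [eLpNorm_trunc] at h
  simpa using h

lemma truncNorm_eq_sqrt_energy (t : ℝ) (f : ℝ → ℝ) : truncNorm t f = √(energy f 0 t).toReal := by
  rw [truncNorm, eLpNorm_trunc, ← ENNReal.toReal_rpow, Real.sqrt_eq_rpow]

lemma rmsNorm_eq_sqrt_energy (T : ℝ) (g : ℝ → ℝ) :
    rmsNorm T g = √((energy g 0 T).toReal / T) := by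
  rw [rmsNorm, Real.sqrt_div ENNReal.toReal_nonneg, eLpNorm_two_eq_lintegral_rpow,
    ← ENNReal.toReal_rpow, ← Real.sqrt_eq_rpow, energy]

section Periodic

variable {g : ℝ → ℝ} {T : ℝ}

lemma le_natCeil_div_mul (t : ℝ) (hT : 0 < T) : t ≤ ⌈t / T⌉₊ * T :=
  (div_le_iff₀ hT).1 (Nat.le_ceil _)

lemma natFloor_div_mul_le {t : ℝ} (ht : 0 ≤ t) (hT : 0 < T) : ⌊t / T⌋₊ * T ≤ t :=
  (le_div_iff₀ hT).1 (Nat.floor_le (div_nonneg ht hT.le))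

lemma energy_nat_mul_period_ne_top (hg : ∀ t, 0 ≤ t → g (t + T) = g t) (hT : 0 < T)
    (hB : energy g 0 T ≠ ⊤) (n : ℕ) : energy g 0 (n * T) ≠ ⊤ := by
  rw [energy_nat_mul_period hg hT.le]
  exact ENNReal.mul_ne_top (ENNReal.natCast_ne_top n) hB

lemma energy_ne_top_of_periodic (hg : ∀ t, 0 ≤ t → g (t + T) = g t) (hT : 0 < T)
    (hB : energy g 0 T ≠ ⊤) (t : ℝ) : energy g 0 t ≠ ⊤ :=
  ne_top_of_le_ne_top (energy_nat_mul_period_ne_top hg hT hB ⌈t / T⌉₊)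
    (energy_mono g le_rfl (le_natCeil_div_mul t hT))

lemma tendsto_energy_div_of_periodic (hg : ∀ t, 0 ≤ t → g (t + T) = g t) (hT : 0 < T)
    (hB : energy g 0 T ≠ ⊤) :
    Tendsto (fun t => (energy g 0 t).toReal / t) atTop (𝓝 ((energy g 0 T).toReal / T)) := by
  set B := (energy g 0 T).toReal
  have hmul (n : ℕ) : (energy g 0 (n * T)).toReal = n * B := by
    rw [energy_nat_mul_period hg hT.le, ENNReal.toReal_mul, ENNReal.toReal_natCast]
  have hlower {t : ℝ} (ht : 0 ≤ t) : ⌊t / T⌋₊ * B ≤ (energy g 0 t).toReal := by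
    rw [← hmul]
    exact ENNReal.toReal_mono (energy_ne_top_of_periodic hg hT hB t)
      (energy_mono g le_rfl (natFloor_div_mul_le ht hT))
  have hupper (t : ℝ) : (energy g 0 t).toReal ≤ ⌈t / T⌉₊ * B := by
    rw [← hmul]
    exact ENNReal.toReal_mono (energy_nat_mul_period_ne_top hg hT hB _)
      (energy_mono g le_rfl (le_natCeil_div_mul t hT))
  have hlim {φ : ℝ → ℕ} (hφ : Tendsto (fun x => (φ x : ℝ) / x) atTop (𝓝 1)) :
      Tendsto (fun t => φ (t / T) * B / t) atTop (𝓝 (B / T)) := by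
    have h := (hφ.comp (tendsto_id.atTop_div_const hT)).mul_const (B / T)
    rw [one_mul] at h
    refine h.congr' ?_
    filter_upwards [eventually_gt_atTop 0] with t ht
    simp only [Function.comp_apply, id]
    field_simp
  refine tendsto_of_tendsto_of_tendsto_of_le_of_le' (hlim tendsto_nat_floor_div_atTop)
    (hlim tendsto_nat_ceil_div_atTop) ?_ ?_ <;>
    filter_upwards [eventually_gt_atTop 0] with t ht
  · exact div_le_div_of_nonneg_right (hlower ht.le) ht.le
  · exact div_le_div_of_nonneg_right (hupper t) ht.le

end Periodic

lemma exists_pos_one_add_mul_add_lt {x y : ℝ} (h : x < y) : ∃ ε > 0, (1 + ε) * (x + ε) + ε < y := by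
  have hcont : ContinuousAt (fun ε : ℝ => (1 + ε) * (x + ε) + ε) 0 := by fun_prop
  have hlt : ∀ᶠ ε in 𝓝 0, (1 + ε) * (x + ε) + ε < y :=
    hcont.eventually (gt_mem_nhds (by simpa using h))
  obtain ⟨ε, hε, hεy⟩ :=
    ((hlt.filter_mono (nhdsWithin_le_nhds (s := Ioi 0))).and self_mem_nhdsWithin).exists
  exact ⟨ε, hεy, hε⟩

lemma tendsto_of_forall_le_one_add_mul_add {ι : Type*} {l : Filter ι} {α β : ι → ℝ} {L : ℝ}
    (hβ : Tendsto β l (𝓝 L))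
    (hαβ : ∀ ε > 0, ∀ᶠ i in l, α i ≤ (1 + ε) * (β i + ε) + ε)
    (hβα : ∀ ε > 0, ∀ᶠ i in l, β i ≤ (1 + ε) * (α i + ε) + ε) :
    Tendsto α l (𝓝 L) := by
  refine tendsto_order.2 ⟨fun a ha => ?_, fun b hb => ?_⟩
  · obtain ⟨ε, hε, hεa⟩ := exists_pos_one_add_mul_add_lt ha
    filter_upwards [hβα ε hε, hβ.eventually (lt_mem_nhds hεa)] with i hi hi'
    by_contra! hia
    nlinarith
  · obtain ⟨ε, hε, hεb⟩ := exists_pos_one_add_mul_add_lt hb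
    have hlim : Tendsto (fun i => (1 + ε) * (β i + ε) + ε) l (𝓝 ((1 + ε) * (L + ε) + ε)) :=
      ((hβ.add_const ε).const_mul (1 + ε)).add_const ε
    filter_upwards [hαβ ε hε, hlim.eventually (gt_mem_nhds hεb)] with i hi hi'
    exact hi.trans_lt hi'

section Comparison

variable {f g : ℝ → ℝ}

lemma tendsto_sub_swap (hfg : Tendsto (f - g) atTop (𝓝 0)) :
    Tendsto (g - f) atTop (𝓝 0) := by
  rw [← neg_sub, ← neg_zero]
  exact hfg.neg

lemma eventually_abs_le_abs_add (hfg : Tendsto (f - g) atTop (𝓝 0)) {ε : ℝ} (hε : 0 < ε) :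
    ∀ᶠ x in atTop, |f x| ≤ |g x| + ε := by
  filter_upwards [hfg.eventually (Metric.ball_mem_nhds 0 hε)] with x hx
  rw [Real.dist_eq, sub_zero, Pi.sub_apply] at hx
  linarith [abs_sub_abs_le_abs_sub (f x) (g x)]

lemma eventually_energy_div_le (hfg : Tendsto (f - g) atTop (𝓝 0))
    (hf : ∀ t, energy f 0 t ≠ ⊤) (hg : ∀ t, energy g 0 t ≠ ⊤) {ε : ℝ} (hε : 0 < ε) :
    ∀ᶠ t in atTop, (energy f 0 t).toReal / t ≤ (1 + ε) * ((energy g 0 t).toReal / t + ε) + ε := by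
  obtain ⟨s, hs⟩ :=
    eventually_atTop.1 ((eventually_abs_le_abs_add hfg hε).and (eventually_ge_atTop 0))
  have hs0 : 0 ≤ s := (hs s le_rfl).2
  have hbound {t : ℝ} (hst : s ≤ t) : (energy f 0 t).toReal
      ≤ (energy f 0 s).toReal + (1 + ε) * ((energy g 0 t).toReal + ε * t) := by
    have h : energy f 0 t
        ≤ energy f 0 s + ENNReal.ofReal (1 + ε) * (energy g 0 t + ENNReal.ofReal (ε * t)) := by
      rw [← energy_add f hs0 hst]
      gcongr
      refine (energy_le_of_abs_le hε.le fun x hx => (hs x hx.1.le).1).trans ?_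
      gcongr
      · exact energy_mono g hs0 le_rfl
      · linarith
    have hεt : 0 ≤ ε * t := mul_nonneg hε.le (hs0.trans hst)
    refine ENNReal.toReal_le_of_le_ofReal (by positivity) (h.trans_eq ?_)
    rw [ENNReal.ofReal_add ENNReal.toReal_nonneg (by positivity), ENNReal.ofReal_toReal (hf s),
      ENNReal.ofReal_mul (p := 1 + ε) (by positivity),
      ENNReal.ofReal_add ENNReal.toReal_nonneg hεt, ENNReal.ofReal_toReal (hg t)]
  have hsmall : ∀ᶠ t in atTop, (energy f 0 s).toReal / t ≤ ε :=
    (tendsto_const_nhds.div_atTop tendsto_id).eventually (ge_mem_nhds hε)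
  filter_upwards [eventually_ge_atTop s, eventually_gt_atTop 0, hsmall] with t hst ht hsmall
  calc (energy f 0 t).toReal / t
      ≤ ((energy f 0 s).toReal + (1 + ε) * ((energy g 0 t).toReal + ε * t)) / t :=
        div_le_div_of_nonneg_right (hbound hst) ht.le
    _ = (energy f 0 s).toReal / t + (1 + ε) * ((energy g 0 t).toReal / t + ε) := by
        field_simp
    _ ≤ _ := by linarith

lemma tendsto_energy_div_of_tendsto_sub (hfg : Tendsto (f - g) atTop (𝓝 0))
    (hf : ∀ t, energy f 0 t ≠ ⊤) (hg : ∀ t, energy g 0 t ≠ ⊤) {L : ℝ}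
    (hL : Tendsto (fun t => (energy g 0 t).toReal / t) atTop (𝓝 L)) :
    Tendsto (fun t => (energy f 0 t).toReal / t) atTop (𝓝 L) :=
  tendsto_of_forall_le_one_add_mul_add hL
    (fun _ hε => eventually_energy_div_le hfg hf hg hε)
    (fun _ hε => eventually_energy_div_le (tendsto_sub_swap hfg) hg hf hε)

lemma energy_period_ne_top_of_tendsto_sub {T : ℝ} (hg : ∀ t, 0 ≤ t → g (t + T) = g t)
    (hT : 0 < T) (hfg : Tendsto (f - g) atTop (𝓝 0)) (hf : ∀ t, energy f 0 t ≠ ⊤) :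
    energy g 0 T ≠ ⊤ := by
  obtain ⟨s, hs⟩ := eventually_atTop.1
    ((eventually_abs_le_abs_add (tendsto_sub_swap hfg) one_pos).and (eventually_ge_atTop 0))
  set k := ⌈s / T⌉₊
  have hk : s ≤ k * T := le_natCeil_div_mul s hT
  rw [← energy_add_nat_mul_period hg hT.le k le_rfl T, zero_add]
  refine ne_top_of_le_ne_top ?_
    (energy_le_of_abs_le zero_le_one fun x hx => (hs x (hk.trans hx.1.le)).1)
  have hfk : energy f (k * T) (T + k * T) ≠ ⊤ :=
    ne_top_of_le_ne_top (hf _) (energy_mono f (by positivity) le_rfl)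
  finiteness

end Comparison

theorem tendsto_truncNorm_div_sqrt_of_tendsto_sub {f g : ℝ → ℝ} {T : ℝ} (hT : 0 < T)
    (hg : ∀ t, 0 ≤ t → g (t + T) = g t) (hfg : Tendsto (f - g) atTop (𝓝 0))
    (hf : ∀ t, eLpNorm (trunc t f) 2 timeMeasure ≠ ⊤) :
    Tendsto (fun t => truncNorm t f / √t) atTop (𝓝 (rmsNorm T g)) := by
  have hfE (t : ℝ) : energy f 0 t ≠ ⊤ := energy_ne_top_of_eLpNorm_trunc_ne_top (hf t)
  have hB := energy_period_ne_top_of_tendsto_sub hg hT hfg hfE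
  have hmean := tendsto_energy_div_of_tendsto_sub hfg hfE (energy_ne_top_of_periodic hg hT hB)
    (tendsto_energy_div_of_periodic hg hT hB)
  rw [rmsNorm_eq_sqrt_energy]
  refine ((Real.continuous_sqrt.tendsto _).comp hmean).congr fun t => ?_
  rw [Function.comp_apply, truncNorm_eq_sqrt_energy, Real.sqrt_div ENNReal.toReal_nonneg]

lemma trunc_sub (t : ℝ) (f g : ℝ → ℝ) : trunc t (f - g) = trunc t f - trunc t g := by
  ext x
  by_cases hx : x ≤ t <;> simp [trunc, hx]

lemma eLpNorm_trunc_le (t : ℝ) (f : ℝ → ℝ) :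
    eLpNorm (trunc t f) 2 timeMeasure ≤ eLpNorm f 2 timeMeasure :=
  eLpNorm_mono fun x => by by_cases hx : x ≤ t <;> simp [trunc, hx]

lemma eLpNorm_trunc_sub_ne_top {R : (ℝ → ℝ) → ℝ → ℝ} {Γ : ℝ}
    (hcausal : ∀ (t : ℝ) (u : ℝ → ℝ), trunc t (R u) = trunc t (R (trunc t u)))
    (hΓ : ∀ u₁ u₂ : ℝ → ℝ, MemLp u₁ 2 timeMeasure → MemLp u₂ 2 timeMeasure →
      eLpNorm (R u₁ - R u₂) 2 timeMeasure ≤ ENNReal.ofReal Γ * eLpNorm (u₁ - u₂) 2 timeMeasure)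
    {u₁ u₂ : ℝ → ℝ} {t : ℝ} (h₁ : MemLp (trunc t u₁) 2 timeMeasure)
    (h₂ : MemLp (trunc t u₂) 2 timeMeasure) :
    eLpNorm (trunc t (R u₁ - R u₂)) 2 timeMeasure ≠ ⊤ := by
  have hcaus : trunc t (R u₁ - R u₂) = trunc t (R (trunc t u₁) - R (trunc t u₂)) := by
    rw [trunc_sub, trunc_sub, hcausal t u₁, hcausal t u₂]
  rw [hcaus]
  refine ne_top_of_le_ne_top ?_ ((eLpNorm_trunc_le t _).trans (hΓ _ _ h₁ h₂))
  exact ENNReal.mul_ne_top ENNReal.ofReal_ne_top (h₁.sub h₂).eLpNorm_ne_top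

theorem incremental_gain_rms_gain_relation_general
    (R : (ℝ → ℝ) → (ℝ → ℝ)) (Γ : ℝ) (T : ℝ) (hT : 0 < T)
    (hcausal : ∀ (t : ℝ) (u : ℝ → ℝ), trunc t (R u) = trunc t (R (trunc t u)))
    (hΓ : ∀ u₁ u₂ : ℝ → ℝ, MemLp u₁ 2 timeMeasure → MemLp u₂ 2 timeMeasure →
      eLpNorm (R u₁ - R u₂) 2 timeMeasure
        ≤ ENNReal.ofReal Γ * eLpNorm (u₁ - u₂) 2 timeMeasure)
    (u₁ u₂ ytilde₁ ytilde₂ : ℝ → ℝ)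
    (hu₁per : ∀ t, 0 ≤ t → u₁ (t + T) = u₁ t)
    (hu₂per : ∀ t, 0 ≤ t → u₂ (t + T) = u₂ t)
    (hy₁per : ∀ t, 0 ≤ t → ytilde₁ (t + T) = ytilde₁ t)
    (hy₂per : ∀ t, 0 ≤ t → ytilde₂ (t + T) = ytilde₂ t)
    (hmem₁ : ∀ t : ℝ, MemLp (trunc t u₁) 2 timeMeasure)
    (hmem₂ : ∀ t : ℝ, MemLp (trunc t u₂) 2 timeMeasure)
    (hconv₁ : ∀ ε > (0:ℝ), ∃ t₀ : ℝ, ∀ τ ≥ t₀, |R u₁ τ - ytilde₁ τ| < ε)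
    (hconv₂ : ∀ ε > (0:ℝ), ∃ t₀ : ℝ, ∀ τ ≥ t₀, |R u₂ τ - ytilde₂ τ| < ε)
    (hne : rmsNorm T (u₁ - u₂) ≠ 0) :
    Tendsto (fun t : ℝ => truncNorm t (R u₁ - R u₂) / truncNorm t (u₁ - u₂)) atTop
      (nhds (rmsNorm T (ytilde₁ - ytilde₂) / rmsNorm T (u₁ - u₂))) := by
  have hu : ∀ t, 0 ≤ t → (u₁ - u₂) (t + T) = (u₁ - u₂) t := fun t ht => by
    simp [hu₁per t ht, hu₂per t ht]
  have hy : ∀ t, 0 ≤ t → (ytilde₁ - ytilde₂) (t + T) = (ytilde₁ - ytilde₂) t := fun t ht => by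
    simp [hy₁per t ht, hy₂per t ht]
  have hconv : Tendsto (R u₁ - R u₂ - (ytilde₁ - ytilde₂)) atTop (𝓝 0) := by
    have h₁ : Tendsto (R u₁ - ytilde₁) atTop (𝓝 0) :=
      Metric.tendsto_atTop.2 (by simpa [Real.dist_eq] using hconv₁)
    have h₂ : Tendsto (R u₂ - ytilde₂) atTop (𝓝 0) :=
      Metric.tendsto_atTop.2 (by simpa [Real.dist_eq] using hconv₂)
    rw [sub_sub_sub_comm, ← sub_zero (0 : ℝ)]
    exact h₁.sub h₂
  have hD := tendsto_truncNorm_div_sqrt_of_tendsto_sub hT hu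
    (by rw [sub_self]; exact tendsto_const_nhds)
    fun t => by rw [trunc_sub]; exact ((hmem₁ t).sub (hmem₂ t)).eLpNorm_ne_top
  have hW := tendsto_truncNorm_div_sqrt_of_tendsto_sub hT hy hconv
    fun t => eLpNorm_trunc_sub_ne_top hcausal hΓ (hmem₁ t) (hmem₂ t)
  refine (hW.div hD hne).congr' ?_
  filter_upwards [eventually_gt_atTop 0] with t ht
  exact div_div_div_cancel_right₀ (Real.sqrt_pos.2 ht).ne' _ _

/-- **Lemma 1 (limit form)**: for a causal, period-preserving operator `R` with finite
incremental gain `Γ`, and `T`-periodic inputs `u₁ ≠ u₂` whose outputs converge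
asymptotically to the `T`-periodic signals `ỹ₁, ỹ₂`,
`lim_{t→∞} ‖P_t(Ru₁ − Ru₂)‖/‖P_t(u₁ − u₂)‖ = ‖ỹ₁ − ỹ₂‖_RMS / ‖u₁ − u₂‖_RMS`. -/
theorem incremental_gain_rms_gain_relation
    (R : (ℝ → ℝ) → (ℝ → ℝ)) (Γ : ℝ) (T : ℝ) (hT : 0 < T) (hΓ0 : 0 ≤ Γ)
    (hcausal : ∀ (t : ℝ) (u : ℝ → ℝ), trunc t (R u) = trunc t (R (trunc t u)))
    (hΓ : ∀ u₁ u₂ : ℝ → ℝ, MemLp u₁ 2 timeMeasure → MemLp u₂ 2 timeMeasure →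
      eLpNorm (R u₁ - R u₂) 2 timeMeasure
        ≤ ENNReal.ofReal Γ * eLpNorm (u₁ - u₂) 2 timeMeasure)
    (u₁ u₂ ytilde₁ ytilde₂ : ℝ → ℝ)
    (hu₁per : ∀ t, 0 ≤ t → u₁ (t + T) = u₁ t)
    (hu₂per : ∀ t, 0 ≤ t → u₂ (t + T) = u₂ t)
    (hy₁per : ∀ t, 0 ≤ t → ytilde₁ (t + T) = ytilde₁ t)
    (hy₂per : ∀ t, 0 ≤ t → ytilde₂ (t + T) = ytilde₂ t)
    (hmem₁ : ∀ t : ℝ, MemLp (trunc t u₁) 2 timeMeasure)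
    (hmem₂ : ∀ t : ℝ, MemLp (trunc t u₂) 2 timeMeasure)
    (hconv₁ : ∀ ε > (0:ℝ), ∃ t₀ : ℝ, ∀ τ ≥ t₀, |R u₁ τ - ytilde₁ τ| < ε)
    (hconv₂ : ∀ ε > (0:ℝ), ∃ t₀ : ℝ, ∀ τ ≥ t₀, |R u₂ τ - ytilde₂ τ| < ε)
    (hne : rmsNorm T (u₁ - u₂) ≠ 0) :
    Tendsto (fun t : ℝ => truncNorm t (R u₁ - R u₂) / truncNorm t (u₁ - u₂)) atTop
      (nhds (rmsNorm T (ytilde₁ - ytilde₂) / rmsNorm T (u₁ - u₂))) :=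
  incremental_gain_rms_gain_relation_general R Γ T hT hcausal hΓ u₁ u₂ ytilde₁ ytilde₂ hu₁per hu₂per
    hy₁per hy₂per hmem₁ hmem₂ hconv₁ hconv₂ hne
end

section
/- For any operator R on a Hilbert space, SRG(I + R) = 1 + SRG(R), where I is the identity operator and 1 + S := {1 + z : z ∈ S}. -/
variable {H : Type*} [NormedAddCommGroup H] [InnerProductSpace ℝ H]

/-- The angle `∠(u,y) = arccos(Re⟨u,y⟩/(‖u‖‖y‖))`. -/
noncomputable def srgAngle (u y : H) : ℝ := Real.arccos ((inner ℝ u y : ℝ) / (‖u‖ * ‖y‖))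

/-- The Scaled Relative Graph of an operator `R` on a Hilbert space. -/
noncomputable def SRG (R : H → H) : Set ℂ :=
  {z | ∃ u₁ u₂ : H, u₁ ≠ u₂ ∧
    (z = (‖R u₁ - R u₂‖ / ‖u₁ - u₂‖ : ℝ) *
          Complex.exp ((srgAngle (u₁ - u₂) (R u₁ - R u₂) : ℂ) * Complex.I) ∨
     z = (‖R u₁ - R u₂‖ / ‖u₁ - u₂‖ : ℝ) *
          Complex.exp (-(srgAngle (u₁ - u₂) (R u₁ - R u₂) : ℂ) * Complex.I))}

/-! The upper-half-plane point `z` that a pair `(Δu, Δy)` contributes to an SRG is determined by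
`Re z = ⟪Δu, Δy⟫ / ‖Δu‖²`, `|z| = ‖Δy‖ / ‖Δu‖` and `Im z ≥ 0`. Replacing `Δy` by `Δu + Δy` turns the
first two quantities into `1 + Re z` and `|1 + z|` (since `‖Δu + Δy‖² = ‖Δu‖² + 2⟪Δu, Δy⟫ + ‖Δy‖²`),
so that point moves to `1 + z`; the lower-half-plane points are the conjugates and move likewise. -/

open Complex ComplexConjugate InnerProductGeometry

lemma srgAngle_eq_angle (u y : H) : srgAngle u y = angle u y := rfl

noncomputable def srgPoint (u y : H) : ℂ :=
  ((‖y‖ / ‖u‖ : ℝ) : ℂ) * exp ((srgAngle u y : ℂ) * I)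

lemma conj_srgPoint (u y : H) :
    conj (srgPoint u y) = ((‖y‖ / ‖u‖ : ℝ) : ℂ) * exp (-(srgAngle u y : ℂ) * I) := by
  rw [srgPoint, map_mul, ← exp_conj, map_mul, conj_ofReal, conj_ofReal, conj_I, mul_neg, neg_mul]

lemma SRG_eq_iUnion (R : H → H) :
    SRG R = ⋃ (u₁ : H) (u₂ : H) (_ : u₁ ≠ u₂),
      {srgPoint (u₁ - u₂) (R u₁ - R u₂), conj (srgPoint (u₁ - u₂) (R u₁ - R u₂))} := by
  ext z
  simp only [SRG, conj_srgPoint, Set.mem_ofPred_eq, Set.mem_iUnion, Set.mem_insert_iff,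
    Set.mem_singleton_iff, exists_prop]
  rfl

lemma re_srgPoint (u y : H) : (srgPoint u y).re = inner ℝ u y / ‖u‖ ^ 2 := by
  rcases eq_or_ne u 0 with rfl | hu
  · simp [srgPoint]
  have hu' : ‖u‖ ≠ 0 := norm_ne_zero_iff.mpr hu
  rw [srgPoint, re_ofReal_mul, exp_ofReal_mul_I_re, srgAngle_eq_angle,
    ← cos_angle_mul_norm_mul_norm]
  field_simp

lemma norm_srgPoint (u y : H) : ‖srgPoint u y‖ = ‖y‖ / ‖u‖ := by
  rw [srgPoint, norm_mul, norm_exp_ofReal_mul_I, mul_one, norm_real,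
    Real.norm_of_nonneg (by positivity)]

lemma im_srgPoint_nonneg (u y : H) : 0 ≤ (srgPoint u y).im := by
  rw [srgPoint, im_ofReal_mul, exp_ofReal_mul_I_im, srgAngle_eq_angle]
  exact mul_nonneg (by positivity) (sin_angle_nonneg u y)

lemma Complex.eq_of_re_eq_of_norm_eq {z w : ℂ} (hre : z.re = w.re) (hnorm : ‖z‖ = ‖w‖)
    (hz : 0 ≤ z.im) (hw : 0 ≤ w.im) : z = w := by
  have him : z.im ^ 2 = w.im ^ 2 := by
    have := congrArg (· ^ 2) hnorm
    simp only [Complex.sq_norm, normSq_apply, hre] at this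
    nlinarith
  exact Complex.ext hre ((sq_eq_sq₀ hz hw).mp him)

lemma Complex.sq_norm_one_add (z : ℂ) : ‖1 + z‖ ^ 2 = 1 + 2 * z.re + ‖z‖ ^ 2 := by
  simp only [Complex.sq_norm, normSq_add, normSq_one, one_mul, conj_re]
  ring

lemma srgPoint_self_add (u y : H) (hu : u ≠ 0) : srgPoint u (u + y) = 1 + srgPoint u y := by
  have hu' : ‖u‖ ≠ 0 := norm_ne_zero_iff.mpr hu
  have hre : (srgPoint u (u + y)).re = 1 + (srgPoint u y).re := by
    rw [re_srgPoint, re_srgPoint, inner_add_right, real_inner_self_eq_norm_sq]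
    field_simp
  have hnorm_sq : ‖srgPoint u (u + y)‖ ^ 2 = ‖1 + srgPoint u y‖ ^ 2 := by
    rw [Complex.sq_norm_one_add, norm_srgPoint, norm_srgPoint, re_srgPoint, div_pow, div_pow,
      norm_add_sq_real]
    field_simp
  have him : 0 ≤ (1 + srgPoint u y).im := by
    rw [add_im, one_im, zero_add]
    exact im_srgPoint_nonneg u y
  exact Complex.eq_of_re_eq_of_norm_eq (by rw [hre, add_re, one_re])
    ((sq_eq_sq₀ (norm_nonneg _) (norm_nonneg _)).mp hnorm_sq) (im_srgPoint_nonneg u _) him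

/-- **SRG translation by the identity**: `SRG(I + R) = 1 + SRG(R)`. -/
theorem SRG_one_add (R : H → H) :
    SRG (fun u => u + R u) = (fun z : ℂ => 1 + z) '' SRG R := by
  simp only [SRG_eq_iUnion, Set.image_iUnion, Set.image_pair]
  refine Set.iUnion₂_congr fun u₁ u₂ => Set.iUnion_congr fun hne => ?_
  rw [add_sub_add_comm, srgPoint_self_add _ _ (sub_ne_zero.mpr hne), map_add, map_one]
end

section
/- For an invertible operator R on a Hilbert space, SRG(R⁻¹) = (SRG(R))⁻¹, where the inverse of a set S ⊆ ℂ is given by the inversion r e^{jω} ↦ (1/r)e^{jω} applied elementwise (i.e., inversion of modulus keeping the angle). -/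
variable {H : Type*} [NormedAddCommGroup H] [InnerProductSpace ℝ H]

/-- The Möbius-type inversion `r e^{jω} ↦ (1/r) e^{jω}`, i.e. `z ↦ 1/z̄`,
inverting the modulus while keeping the angle. -/
noncomputable def srgInv (z : ℂ) : ℂ := ((starRingEnd ℂ) z)⁻¹

lemma srgAngle_symm (u y : H) : srgAngle u y = srgAngle y u := by
  simp [srgAngle, real_inner_comm, mul_comm]

lemma srgInv_form (a b θ : ℝ) :
    srgInv (((a / b : ℝ) : ℂ) * Complex.exp ((θ : ℂ) * Complex.I)) =
      ((b / a : ℝ) : ℂ) * Complex.exp ((θ : ℂ) * Complex.I) := by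
  have h1 : (starRingEnd ℂ) (((a / b : ℝ) : ℂ) * Complex.exp ((θ : ℂ) * Complex.I)) =
      ((a / b : ℝ) : ℂ) * Complex.exp (-((θ : ℂ) * Complex.I)) := by
    rw [map_mul, Complex.conj_ofReal, ← Complex.exp_conj, map_mul, Complex.conj_ofReal,
      Complex.conj_I, mul_neg]
  rw [srgInv, h1, mul_inv, ← Complex.exp_neg, neg_neg]
  congr 1
  push_cast
  rw [inv_div]

lemma srgInv_form_neg (a b θ : ℝ) :
    srgInv (((a / b : ℝ) : ℂ) * Complex.exp (-(θ : ℂ) * Complex.I)) =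
      ((b / a : ℝ) : ℂ) * Complex.exp (-(θ : ℂ) * Complex.I) := by
  have := srgInv_form a b (-θ)
  push_cast at this
  simpa using this

/-- **SRG of the inverse operator**: for an invertible operator `R` with inverse `S`,
`SRG(R⁻¹) = (SRG(R))⁻¹`, the elementwise modulus inversion keeping the angle. -/
theorem SRG_inv (R S : H → H)
    (hSR : Function.LeftInverse S R) (hRS : Function.RightInverse S R) :
    SRG S = srgInv '' SRG R := by
  ext z
  constructor
  · rintro ⟨v₁, v₂, hne, hz⟩
    refine ⟨srgInv z, ⟨S v₁, S v₂, ?_, ?_⟩, ?_⟩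
    · intro h; exact hne (by rw [← hRS v₁, ← hRS v₂, h])
    · have h1 : R (S v₁) = v₁ := hRS v₁
      have h2 : R (S v₂) = v₂ := hRS v₂
      rw [h1, h2]
      have hang : srgAngle (S v₁ - S v₂) (v₁ - v₂) = srgAngle (v₁ - v₂) (S v₁ - S v₂) :=
        srgAngle_symm _ _
      rcases hz with hz | hz
      · left; rw [hz, hang, srgInv_form]
      · right; rw [hz, hang, srgInv_form_neg]
    · -- srgInv (srgInv z) = z, since z ≠ 0 ∨ z = 0 both work
      simp only [srgInv, map_inv₀, Complex.conj_conj, inv_inv]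
  · rintro ⟨w, ⟨u₁, u₂, hne, hw⟩, rfl⟩
    refine ⟨R u₁, R u₂, ?_, ?_⟩
    · intro h; exact hne (by rw [← hSR u₁, ← hSR u₂, h])
    · rw [hSR u₁, hSR u₂]
      have hang : srgAngle (R u₁ - R u₂) (u₁ - u₂) = srgAngle (u₁ - u₂) (R u₁ - R u₂) :=
        srgAngle_symm _ _
      rcases hw with hw | hw
      · left; rw [hw, srgInv_form, hang]
      · right; rw [hw, srgInv_form_neg, hang]
end

section
/- For an LTI operator G acting on the sinusoidal input space 𝒰_ω = {a sin(ωt + φ)}, the SRG restricted to 𝒰_ω is exactly the two-point set {G(jω), G(−jω)} = {G(jω), conj(G(jω))}. -/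
/-- Phasor inner product on `ℂ` viewed as a real Hilbert space: `⟨u,v⟩ = Re(ū·v)`. -/
noncomputable def phasorInner (u v : ℂ) : ℝ := ((starRingEnd ℂ) u * v).re

/-- The angle `∠(u,y) = arccos(Re⟨u,y⟩/(‖u‖‖y‖))` in the phasor model. -/
noncomputable def phasorAngle (u y : ℂ) : ℝ :=
  Real.arccos (phasorInner u y / (‖u‖ * ‖y‖))

/-- The SRG of an operator on the phasor space `ℂ` (which models the sinusoidal input
space `𝒰_ω`, an LTI system `G` acting as multiplication by `G(jω)`). -/
noncomputable def SRGphasor (R : ℂ → ℂ) : Set ℂ :=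
  {z | ∃ u₁ u₂ : ℂ, u₁ ≠ u₂ ∧
    (z = (‖R u₁ - R u₂‖ / ‖u₁ - u₂‖ : ℝ) *
          Complex.exp ((phasorAngle (u₁ - u₂) (R u₁ - R u₂) : ℂ) * Complex.I) ∨
     z = (‖R u₁ - R u₂‖ / ‖u₁ - u₂‖ : ℝ) *
          Complex.exp (-(phasorAngle (u₁ - u₂) (R u₁ - R u₂) : ℂ) * Complex.I))}

/-!
Every difference of inputs is a nonzero phasor `d`, and its image is `g d`. Hence the gain
is always `‖g‖` and the angle between `d` and `g d` is `arccos (Re g / ‖g‖) = |arg g|`, so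
the two SRG points `‖g‖ e^{± i |arg g|}` are `g` and `conj g`, whatever `d` is. (For `g = 0`
the angle is `π / 2` instead, but the gain `0` makes it irrelevant.)
-/

open Complex ComplexConjugate

lemma Complex.norm_mul_exp_neg_arg_mul_I (g : ℂ) :
    (‖g‖ : ℂ) * exp (-(g.arg : ℂ) * I) = conj g := by
  conv_rhs => rw [← norm_mul_exp_arg_mul_I g]
  rw [map_mul, conj_ofReal, ← exp_conj, map_mul, conj_ofReal, conj_I, mul_neg, neg_mul]

lemma Complex.norm_mul_exp_abs_arg_or_iff (g z : ℂ) :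
    (z = ‖g‖ * exp (|g.arg| * I) ∨ z = ‖g‖ * exp (-|g.arg| * I)) ↔ z = g ∨ z = conj g := by
  rcases le_or_gt 0 g.arg with hle | hlt
  · rw [abs_of_nonneg hle, norm_mul_exp_arg_mul_I, norm_mul_exp_neg_arg_mul_I]
  · rw [abs_of_neg hlt, ofReal_neg, neg_neg, norm_mul_exp_arg_mul_I,
      norm_mul_exp_neg_arg_mul_I, or_comm]

lemma phasorInner_mul_right_self (g d : ℂ) : phasorInner d (g * d) = ‖d‖ ^ 2 * g.re := by
  rw [phasorInner, mul_left_comm, conj_mul', ← ofReal_pow, re_mul_ofReal, mul_comm]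

lemma phasorAngle_mul_right_self {g d : ℂ} (hg : g ≠ 0) (hd : d ≠ 0) :
    phasorAngle d (g * d) = |g.arg| := by
  have hd' : ‖d‖ ≠ 0 := norm_ne_zero_iff.mpr hd
  have hcos : phasorInner d (g * d) / (‖d‖ * ‖g * d‖) = Real.cos |g.arg| := by
    rw [Real.cos_abs, cos_arg hg, phasorInner_mul_right_self, norm_mul]
    field_simp
  rw [phasorAngle, hcos, Real.arccos_cos (abs_nonneg _) (abs_arg_le_pi g)]

lemma srg_points_mul_iff {g d z : ℂ} (hd : d ≠ 0) :
    (z = (‖g * d‖ / ‖d‖ : ℝ) * exp ((phasorAngle d (g * d) : ℂ) * I) ∨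
      z = (‖g * d‖ / ‖d‖ : ℝ) * exp (-(phasorAngle d (g * d) : ℂ) * I)) ↔
      z = g ∨ z = conj g := by
  rw [norm_mul, mul_div_cancel_right₀ _ (norm_ne_zero_iff.mpr hd)]
  rcases eq_or_ne g 0 with rfl | hg
  · simp
  · rw [phasorAngle_mul_right_self hg hd, norm_mul_exp_abs_arg_or_iff]

/-- **SRG of an LTI operator on the sinusoidal input space** `𝒰_ω`: identifying
sinusoids of frequency `ω` with phasors, on which `G` acts as multiplication by
`g = G(jω)`, the SRG is exactly the two-point set `{G(jω), conj(G(jω))}`. -/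
theorem SRG_lti_sinusoidal (g : ℂ) :
    SRGphasor (fun u => g * u) = {g, (starRingEnd ℂ) g} := by
  ext z
  simp only [SRGphasor, Set.mem_ofPred_eq, Set.mem_insert_iff, Set.mem_singleton_iff, ← mul_sub]
  constructor
  · rintro ⟨u₁, u₂, hu, hz⟩
    exact (srg_points_mul_iff (sub_ne_zero.mpr hu)).mp hz
  · intro hz
    exact ⟨1, 0, one_ne_zero, (srg_points_mul_iff (by simp)).mpr hz⟩
end

section
/- Minimum arc containment gives h-convexity of disks centered on the real axis: the upper half D⁺ = D_r(c) ∩ {Im z ≥ 0} of a closed disk with center c ∈ ℝ and radius r > 0 is h-convex, i.e. for any z₁, z₂ ∈ D⁺, the arc Arc_min(z₁, z₂) of the unique circle through z₁, z₂ centered on ℝ, restricted to Re z₁ ≤ Re z ≤ Re z₂ and Im z ≥ 0, is contained in D⁺. -/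
/-!
Moving the center of a circle along the real axis from `x` to `c` changes squared distances by
`(x - c) (2 Re w - c - x)`, an affine function of `Re w`. So on a circle centered at `x ∈ ℝ`, the
distance to `c ∈ ℝ` is monotone in the real part, and the arc between `z₁` and `z₂` stays within
distance `max ‖z₁ - c‖ ‖z₂ - c‖` of `c`.
-/

/-- The minimal arc `Arc_min(z₁,z₂)`: the points of a circle through `z₁` and `z₂`
centered on the real axis with `Re z₁ ≤ Re z ≤ Re z₂` and `Im z ≥ 0`. -/
def ArcMin (z₁ z₂ : ℂ) : Set ℂ :=
  {z | ∃ x : ℝ, ‖z₁ - x‖ = ‖z₂ - x‖ ∧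
        ‖z - x‖ = ‖z₁ - x‖ ∧
        z₁.re ≤ z.re ∧ z.re ≤ z₂.re ∧ 0 ≤ z.im}

/-- The closed upper half of the disk of radius `r` centered at `c ∈ ℝ`. -/
def upperHalfDisk (c r : ℝ) : Set ℂ :=
  {z | ‖z - c‖ ≤ r ∧ 0 ≤ z.im}

lemma Complex.sq_norm_sub_ofReal_eq (w : ℂ) (c x : ℝ) :
    ‖w - c‖ ^ 2 = ‖w - x‖ ^ 2 + (x - c) * (2 * w.re - c - x) := by
  simp only [Complex.sq_norm, Complex.normSq_apply, Complex.sub_re, Complex.sub_im,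
    Complex.ofReal_re, Complex.ofReal_im]
  ring

lemma Complex.norm_sub_ofReal_le_of_norm_sub_ofReal_eq {w w' : ℂ} {c x : ℝ}
    (hw : ‖w - x‖ = ‖w' - x‖) (h : (x - c) * (w.re - w'.re) ≤ 0) :
    ‖w - c‖ ≤ ‖w' - c‖ := by
  have hsq : ‖w - c‖ ^ 2 ≤ ‖w' - c‖ ^ 2 := by
    rw [sq_norm_sub_ofReal_eq w c x, sq_norm_sub_ofReal_eq w' c x, hw]
    nlinarith
  exact (pow_le_pow_iff_left₀ (norm_nonneg _) (norm_nonneg _) two_ne_zero).1 hsq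

theorem upperHalfDisk_hconvex_general
    (c r : ℝ) (z₁ z₂ : ℂ)
    (h₁ : z₁ ∈ upperHalfDisk c r) (h₂ : z₂ ∈ upperHalfDisk c r) :
    ArcMin z₁ z₂ ⊆ upperHalfDisk c r := by
  rintro z ⟨x, hx₁₂, hzx, hre₁, hre₂, him⟩
  refine ⟨?_, him⟩
  rcases le_total c x with hcx | hxc
  · have h := mul_nonpos_of_nonneg_of_nonpos (sub_nonneg.2 hcx) (sub_nonpos.2 hre₂)
    exact (Complex.norm_sub_ofReal_le_of_norm_sub_ofReal_eq (hzx.trans hx₁₂) h).trans h₂.1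
  · have h := mul_nonpos_of_nonpos_of_nonneg (sub_nonpos.2 hxc) (sub_nonneg.2 hre₁)
    exact (Complex.norm_sub_ofReal_le_of_norm_sub_ofReal_eq hzx h).trans h₁.1

/-- **h-convexity of upper half disks centered on the real axis**: for any
`z₁, z₂` in the upper half disk with `Re z₁ ≤ Re z₂`, the minimal arc
`Arc_min(z₁, z₂)` is contained in the upper half disk. -/
theorem upperHalfDisk_hconvex
    (c r : ℝ) (hr : 0 < r) (z₁ z₂ : ℂ)
    (h₁ : z₁ ∈ upperHalfDisk c r) (h₂ : z₂ ∈ upperHalfDisk c r)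
    (hre : z₁.re ≤ z₂.re) :
    ArcMin z₁ z₂ ⊆ upperHalfDisk c r :=
  upperHalfDisk_hconvex_general c r z₁ z₂ h₁ h₂
end
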